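/- arXiv:1105.6312 — 4 statements merged into one kernel-verified Lean document; each statement's English description precedes it below -/
import Mathlib

section
/- Let $E$ be the elliptic curve over $\mathbb{Q}(s)$ defined by $V^2 + (s + 1/s - 2) U V = U(U-1)^2$. Then the point $A = (s, s-1)$ is a point of exact order $8$ on $E$. -/
noncomputable section

/-- The elliptic curve `V² + (s + 1/s - 2)UV = U(U-1)²` over `ℚ(s)`. -/
def W6 : WeierstrassCurve.Affine (RatFunc ℚ) :=
  { a₁ := RatFunc.X + 1 / RatFunc.X - 2, a₂ := -2, a₃ := 0, a₄ := 1, a₆ := 0 }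

/-! Doubling along tangents gives `2A = (1, 0)` and `2(1, 0) = (0, 0)`, and `(0, 0)` is its own
negative since negation is `(U, V) ↦ (U, -V - a₁U)`. Hence `4A ≠ 0 = 8A`. The computations are
rational identities in `s`, valid over any field as long as `s ≠ 0` and `s² ≠ 1`. -/

namespace WeierstrassCurve.Affine.Point

variable {F : Type*} [Field F] [DecidableEq F] {W : WeierstrassCurve.Affine F}

lemma some_add_self_of_slope {x y ℓ x' y' : F} {h : W.Nonsingular x y} (h' : W.Nonsingular x' y')
    (hy : y ≠ W.negY x y)
    (hℓ : ℓ * (y - W.negY x y) = 3 * x ^ 2 + 2 * W.a₂ * x + W.a₄ - W.a₁ * y)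
    (hx' : W.addX x x ℓ = x') (hy' : W.addY x x y ℓ = y') :
    some x y h + some x y h = some x' y' h' := by
  have hslope : W.slope x x y y = ℓ := by
    rw [slope_of_Y_ne rfl hy, div_eq_iff (sub_ne_zero.2 hy), hℓ]
  subst hx' hy'
  rw [add_self_of_Y_ne hy]
  simp only [hslope]

end WeierstrassCurve.Affine.Point

open WeierstrassCurve.Affine

def orderEightCurve {K : Type*} [Field K] (a : K) : WeierstrassCurve.Affine K :=
  { a₁ := a + 1 / a - 2, a₂ := -2, a₃ := 0, a₄ := 1, a₆ := 0 }

namespace orderEightCurve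

variable {K : Type*} [Field K] {a : K}

lemma a₁_ne_zero (ha₀ : a ≠ 0) (ha : a ^ 2 ≠ 1) : (orderEightCurve a).a₁ ≠ 0 := by
  have h1 : a - 1 ≠ 0 := fun h ↦ ha (by rw [sub_eq_zero.1 h, one_pow])
  have h : (orderEightCurve a).a₁ = (a - 1) ^ 2 / a := by
    simp only [orderEightCurve]
    field_simp
    ring
  rw [h]
  exact div_ne_zero (pow_ne_zero 2 h1) ha₀

lemma negY_self_sub_one (ha₀ : a ≠ 0) : (orderEightCurve a).negY a (a - 1) = a - a ^ 2 := by
  simp only [negY, orderEightCurve]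
  field_simp
  ring

lemma Y_ne_negY_self_sub_one (ha₀ : a ≠ 0) (ha : a ^ 2 ≠ 1) :
    a - 1 ≠ (orderEightCurve a).negY a (a - 1) := by
  rw [negY_self_sub_one ha₀]
  intro h
  exact ha (by linear_combination h)

lemma nonsingular_self_sub_one (ha₀ : a ≠ 0) (ha : a ^ 2 ≠ 1) :
    (orderEightCurve a).Nonsingular a (a - 1) := by
  refine (nonsingular_iff _ _).2 ⟨(equation_iff _ _).2 ?_, Or.inr ?_⟩
  · simp only [orderEightCurve]
    field_simp
    ring
  · exact Y_ne_negY_self_sub_one ha₀ ha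

lemma nonsingular_one_zero (ha₀ : a ≠ 0) (ha : a ^ 2 ≠ 1) :
    (orderEightCurve a).Nonsingular 1 0 := by
  refine (nonsingular_iff' _ _).2 ⟨(equation_iff _ _).2 ?_, Or.inr ?_⟩
  · simp only [orderEightCurve]
    ring
  · simpa [orderEightCurve] using a₁_ne_zero ha₀ ha

lemma nonsingular_zero_zero : (orderEightCurve a).Nonsingular 0 0 := by
  refine (nonsingular_iff _ _).2 ⟨(equation_iff _ _).2 ?_, Or.inl ?_⟩
  · simp only [orderEightCurve]
    ring
  · simp [orderEightCurve]

variable [DecidableEq K]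

lemma two_nsmul_some_self_sub_one (ha₀ : a ≠ 0) (ha : a ^ 2 ≠ 1) :
    2 • Point.some _ _ (nonsingular_self_sub_one ha₀ ha) =
      Point.some _ _ (nonsingular_one_zero ha₀ ha) := by
  rw [two_nsmul]
  refine Point.some_add_self_of_slope _ (Y_ne_negY_self_sub_one ha₀ ha) (ℓ := 2 - 1 / a)
    ?_ ?_ ?_
  · rw [negY_self_sub_one ha₀]
    simp only [orderEightCurve]
    field_simp
    ring
  · simp only [addX, orderEightCurve]
    field_simp
    ring
  · simp only [addY, negAddY, negY, addX, orderEightCurve]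
    field_simp
    ring

lemma two_nsmul_some_one_zero (ha₀ : a ≠ 0) (ha : a ^ 2 ≠ 1) :
    2 • Point.some _ _ (nonsingular_one_zero ha₀ ha) =
      Point.some _ _ nonsingular_zero_zero := by
  have hy : (0 : K) ≠ (orderEightCurve a).negY 1 0 := by
    simpa [negY, eq_comm, show (orderEightCurve a).a₃ = 0 from rfl] using a₁_ne_zero ha₀ ha
  rw [two_nsmul]
  refine Point.some_add_self_of_slope _ hy (ℓ := 0) ?_ ?_ ?_
  · simp only [orderEightCurve]
    ring
  · simp only [addX, orderEightCurve]
    ring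
  · simp only [addY, negAddY, negY, addX, orderEightCurve]
    ring

lemma two_nsmul_some_zero_zero : 2 • Point.some _ _ (nonsingular_zero_zero (a := a)) = 0 := by
  rw [two_nsmul]
  exact Point.add_self_of_Y_eq (by simp [negY, orderEightCurve])

theorem addOrderOf_some_self_sub_one (ha₀ : a ≠ 0) (ha : a ^ 2 ≠ 1) :
    addOrderOf (Point.some _ _ (nonsingular_self_sub_one ha₀ ha)) = 8 := by
  have h4 : 4 • Point.some _ _ (nonsingular_self_sub_one ha₀ ha) =
      Point.some _ _ nonsingular_zero_zero := by
    rw [show 4 = 2 * 2 from rfl, mul_nsmul', two_nsmul_some_self_sub_one ha₀ ha,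
      two_nsmul_some_one_zero ha₀ ha]
  have h8 : 8 • Point.some _ _ (nonsingular_self_sub_one ha₀ ha) = 0 := by
    rw [show 8 = 2 * 4 from rfl, mul_nsmul', h4, two_nsmul_some_zero_zero]
  exact addOrderOf_eq_prime_pow (p := 2) (n := 2)
    (by rw [show 2 ^ 2 = 4 from rfl, h4]; exact Point.some_ne_zero _) h8

end orderEightCurve

lemma RatFunc.X_sq_ne_one {k : Type*} [Field k] : (RatFunc.X : RatFunc k) ^ 2 ≠ 1 := by
  intro h
  have h' : (Polynomial.X : Polynomial k) ^ 2 = 1 :=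
    RatFunc.algebraMap_injective k (by simpa [RatFunc.algebraMap_X] using h)
  simpa using congrArg (Polynomial.eval 0) h'

open Classical in
/-- The point `A = (s, s - 1)` on `V² + (s + 1/s - 2)UV = U(U-1)²` has exact order 8. -/
theorem stmt6 :
    ∃ h : W6.Nonsingular RatFunc.X (RatFunc.X - 1),
      addOrderOf (WeierstrassCurve.Affine.Point.some _ _ h) = 8 :=
  ⟨_, orderEightCurve.addOrderOf_some_self_sub_one RatFunc.X_ne_zero RatFunc.X_sq_ne_one⟩
end
end

section
/- On the elliptic curve $y^2 + (c^2 + 5)xy + y = x^3$ over $\mathbb{Q}(c)$, the point $(0,0)$ has exact order $3$, and the point $P = \left(-\tfrac{1}{4}(c^4+c^2+1),\ \tfrac{1}{8}(c^2-c+1)^3\right)$ lies on the curve and has infinite order. -/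
/-!
Adding the 3-torsion point `T = (0, 0)` to `P = (x, y)` on `y² + a₁xy + y = x³` gives
`P + T = (-y/x², -y/x³)`. At the place `π = c² + c + 1` of `ℚ(c)` the coordinate `x` of `P` has
positive valuation, and `-y ≡ 1 (mod π)` because `c² - c + 1 ≡ -2c` and `c³ ≡ 1`. Rescaling by
`t = x`, i.e. `(X, Y) = (t²x, t³y)`, the curve reduces mod `π` to the cusp `Y² = X³`, whose smooth
points `(a⁻², a⁻³)` form the additive group of `ℚ` through `a = X/Y`; `P + T` reduces to the point
with `a = 1`, so `n • (P + T)` reduces to the one with `a = n` and is never `0`. Hence `P + T`, and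
with it `P`, has infinite order.
-/

noncomputable section

/-- The elliptic curve `y² + (c² + 5)xy + y = x³` over `ℚ(c)`. -/
def W13 : WeierstrassCurve.Affine (RatFunc ℚ) :=
  { a₁ := RatFunc.X ^ 2 + 5, a₂ := 0, a₃ := 1, a₄ := 0, a₆ := 0 }

open Polynomial IsDedekindDomain WeierstrassCurve.Affine

namespace Valuation

variable {k K Γ₀ : Type*} [Field k] [Field K] [Algebra k K] [LinearOrderedCommGroupWithZero Γ₀]
  (v : Valuation K Γ₀)

def HasResidue (f : K) (q : k) : Prop := v (f - algebraMap k K q) < 1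

variable {v}

lemma hasResidue_zero_iff {f : K} : v.HasResidue f (0 : k) ↔ v f < 1 := by
  simp [HasResidue]

lemma HasResidue.add {f g : K} {q r : k} (hf : v.HasResidue f q) (hg : v.HasResidue g r) :
    v.HasResidue (f + g) (q + r) := by
  unfold HasResidue
  rw [_root_.map_add, add_sub_add_comm]
  exact v.map_add_lt hf hg

lemma HasResidue.neg {f : K} {q : k} (hf : v.HasResidue f q) : v.HasResidue (-f) (-q) := by
  have : -f - algebraMap k K (-q) = -(f - algebraMap k K q) := by rw [_root_.map_neg]; ring
  unfold HasResidue
  rwa [this, Valuation.map_neg]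

lemma HasResidue.sub {f g : K} {q r : k} (hf : v.HasResidue f q) (hg : v.HasResidue g r) :
    v.HasResidue (f - g) (q - r) := by
  simpa only [sub_eq_add_neg] using hf.add hg.neg

variable [v.IsTrivialOn k]

lemma HasResidue.le_one {f : K} {q : k} (hf : v.HasResidue f q) : v f ≤ 1 := by
  rw [← sub_add_cancel f (algebraMap k K q)]
  exact v.map_add_le hf.le (IsTrivialOn.valuation_algebraMap_le_one v q)

lemma HasResidue.map_eq_one {f : K} {q : k} (hf : v.HasResidue f q) (hq : q ≠ 0) : v f = 1 := by
  rw [← sub_add_cancel f (algebraMap k K q), v.map_add_eq_of_lt_right] <;>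
    rw [IsTrivialOn.eq_one q hq]
  exact hf

lemma HasResidue.ne_zero {f : K} {q : k} (hf : v.HasResidue f q) (hq : q ≠ 0) : f ≠ 0 := by
  rintro rfl
  simpa using hf.map_eq_one hq

lemma HasResidue.mul {f g : K} {q r : k} (hf : v.HasResidue f q) (hg : v.HasResidue g r) :
    v.HasResidue (f * g) (q * r) := by
  have : f * g - algebraMap k K (q * r) =
      f * (g - algebraMap k K r) + (f - algebraMap k K q) * algebraMap k K r := by
    rw [_root_.map_mul]; ring
  unfold HasResidue
  rw [this]
  refine v.map_add_lt ?_ ?_ <;> rw [_root_.map_mul]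
  · exact (mul_le_of_le_one_left' hf.le_one).trans_lt hg
  · exact (mul_le_of_le_one_right' (IsTrivialOn.valuation_algebraMap_le_one v r)).trans_lt hf

lemma HasResidue.inv {f : K} {q : k} (hf : v.HasResidue f q) (hq : q ≠ 0) :
    v.HasResidue f⁻¹ q⁻¹ := by
  have hf0 := hf.ne_zero hq
  have hq0 : algebraMap k K q ≠ 0 := by simpa using hq
  have : f⁻¹ - algebraMap k K q⁻¹ = (algebraMap k K q - f) / (f * algebraMap k K q) := by
    rw [map_inv₀]; field_simp
  unfold HasResidue
  rw [this, map_div₀, _root_.map_mul, hf.map_eq_one hq, IsTrivialOn.eq_one q hq, mul_one, div_one,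
    ← Valuation.map_neg, neg_sub]
  exact hf

lemma HasResidue.div {f g : K} {q r : k} (hf : v.HasResidue f q) (hg : v.HasResidue g r)
    (hr : r ≠ 0) : v.HasResidue (f / g) (q / r) := by
  simpa only [div_eq_mul_inv] using hf.mul (hg.inv hr)

end Valuation

namespace WeierstrassCurve.Affine

variable {F : Type*} [Field F] [DecidableEq F] {W : Affine F}

lemma slope_mul_sub_negY {x₁ x₂ y₁ y₂ : F} (h₁ : W.Equation x₁ y₁) (h₂ : W.Equation x₂ y₂)
    (hxy : ¬(x₁ = x₂ ∧ y₁ = W.negY x₂ y₂)) :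
    W.slope x₁ x₂ y₁ y₂ * (y₁ - W.negY x₁ y₂) =
      x₁ ^ 2 + x₁ * x₂ + x₂ ^ 2 + W.a₂ * (x₁ + x₂) + W.a₄ - W.a₁ * y₂ := by
  rw [equation_iff] at h₁ h₂
  by_cases hx : x₁ = x₂
  · subst hx
    have hy : y₁ ≠ W.negY x₁ y₂ := fun hy => hxy ⟨rfl, hy⟩
    obtain rfl := Y_eq_of_Y_ne ((equation_iff ..).mpr h₁) ((equation_iff ..).mpr h₂) rfl hy
    rw [slope_of_Y_ne rfl hy, div_mul_cancel₀ _ (sub_ne_zero.mpr hy)]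
    ring
  · rw [slope_of_X_ne hx, div_mul_eq_mul_div, div_eq_iff (sub_ne_zero.mpr hx), negY]
    linear_combination h₁ - h₂

lemma slope_origin_mul {x : F} (y : F) (hx : x ≠ 0) : W.slope x 0 y 0 * x = y := by
  rw [slope_of_X_ne hx, sub_zero, sub_zero, div_mul_cancel₀ _ hx]

section ThreeTorsionAtOrigin

variable (h₂ : W.a₂ = 0) (h₄ : W.a₄ = 0)
include h₂ h₄

theorem addOrderOf_some_zero_zero (h : W.Nonsingular 0 0) : addOrderOf (Point.some 0 0 h) = 3 := by
  have ha₃ : W.a₃ ≠ 0 := by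
    rw [nonsingular_zero, h₄] at h
    tauto
  have hy : (0 : F) ≠ W.negY 0 0 := by simpa [negY] using ha₃
  have hℓ : W.slope 0 0 0 0 = 0 := by simp [slope_of_Y_ne rfl hy, h₂, h₄]
  have h3 : 3 • Point.some 0 0 h = 0 := by
    rw [show 3 = 2 + 1 from rfl, succ_nsmul, two_nsmul, Point.add_self_of_Y_ne hy]
    exact Point.add_of_Y_eq (by simp [hℓ, h₂]) (by simp [addY, negY, hℓ, h₂])
  exact addOrderOf_eq_prime h3 (Point.some_ne_zero h)

variable (h₆ : W.a₆ = 0) {x y : F} (h : W.Equation x y) (hx : x ≠ 0)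
include h₆ h hx

lemma addX_zero_mul_sq : W.addX x 0 (W.slope x 0 y 0) * x ^ 2 = -W.a₃ * y := by
  rw [equation_iff, h₂, h₄, h₆] at h
  have hℓ := slope_origin_mul (W := W) y hx
  rw [addX, h₂]
  linear_combination (W.slope x 0 y 0 * x + y + W.a₁ * x) * hℓ + h

lemma addY_zero_mul_cube : W.addY x 0 y (W.slope x 0 y 0) * x ^ 3 = -W.a₃ ^ 2 * y := by
  have hX := addX_zero_mul_sq h₂ h₄ h₆ h hx
  rw [equation_iff, h₂, h₄, h₆] at h
  have hℓ := slope_origin_mul (W := W) y hx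
  rw [addY, negAddY, negY]
  linear_combination (x ^ 3 - W.addX x 0 (W.slope x 0 y 0) * x ^ 2) * hℓ - (y + W.a₁ * x) * hX +
    W.a₃ * h

end ThreeTorsionAtOrigin

end WeierstrassCurve.Affine

namespace WeierstrassCurve.Affine.Point

variable {k K Γ₀ : Type*} [Field k] [Field K] [Algebra k K] [LinearOrderedCommGroupWithZero Γ₀]
  (v : Valuation K Γ₀) (t : K) {W : Affine K}

/-- After the rescaling `(X, Y) = (t²x, t³y)`, the point `P` reduces modulo `v` to the point
`(a⁻², a⁻³)` of the cusp `Y² = X³`, whose smooth locus is the additive group via `a = X / Y`. -/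
def ReducesToCusp (P : W.Point) (a : k) : Prop :=
  ∃ x y, ∃ h : W.Nonsingular x y, P = .some x y h ∧
    v.HasResidue (x * t ^ 2) (a⁻¹ ^ 2) ∧ v.HasResidue (y * t ^ 3) (a⁻¹ ^ 3)

variable {v t} {P : W.Point} {a : k}

theorem ReducesToCusp.ne_zero (hP : P.ReducesToCusp v t a) : P ≠ 0 := by
  obtain ⟨x, y, h, rfl, -⟩ := hP
  exact some_ne_zero h

variable [LinearOrder k] [IsStrictOrderedRing k] [v.IsTrivialOn k] [DecidableEq K]
  (h₁ : v.HasResidue (W.a₁ * t) (0 : k)) (h₂ : v.HasResidue (W.a₂ * t ^ 2) (0 : k))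
  (h₃ : v.HasResidue (W.a₃ * t ^ 3) (0 : k)) (h₄ : v.HasResidue (W.a₄ * t ^ 4) (0 : k))
include h₁ h₂ h₃ h₄

theorem ReducesToCusp.add {Q : W.Point} {b : k} (hP : P.ReducesToCusp v t a)
    (hQ : Q.ReducesToCusp v t b) (ha : 0 < a) (hb : 0 < b) :
    (P + Q).ReducesToCusp v t (a + b) := by
  obtain ⟨x₁, y₁, hP, rfl, hx₁, hy₁⟩ := hP
  obtain ⟨x₂, y₂, hQ, rfl, hx₂, hy₂⟩ := hQ
  -- The slope is handled as `N / D` with `D = y₁ - negY x₁ y₂`, which covers chords and tangents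
  -- alike and reduces to `a⁻³ + b⁻³ ≠ 0`.
  have hD0 : a⁻¹ ^ 3 + b⁻¹ ^ 3 ≠ 0 := by positivity
  have hD : v.HasResidue ((y₁ - W.negY x₁ y₂) * t ^ 3) (a⁻¹ ^ 3 + b⁻¹ ^ 3) := by
    convert (hy₁.add hy₂).add ((h₁.mul hx₁).add h₃) using 1
    · rw [negY]; ring
    · ring
  have hxy : ¬(x₁ = x₂ ∧ y₁ = W.negY x₂ y₂) := by
    rintro ⟨rfl, hy⟩
    exact hD.ne_zero hD0 (by rw [hy, sub_self, zero_mul])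
  have hN : v.HasResidue
      ((x₁ ^ 2 + x₁ * x₂ + x₂ ^ 2 + W.a₂ * (x₁ + x₂) + W.a₄ - W.a₁ * y₂) * t ^ 4)
      (a⁻¹ ^ 2 * a⁻¹ ^ 2 + a⁻¹ ^ 2 * b⁻¹ ^ 2 + b⁻¹ ^ 2 * b⁻¹ ^ 2) := by
    convert ((((hx₁.mul hx₁).add (hx₁.mul hx₂)).add (hx₂.mul hx₂)).add
      (h₂.mul (hx₁.add hx₂))).add h₄ |>.sub (h₁.mul hy₂) using 1
    · ring
    · ring
  set ℓ := W.slope x₁ x₂ y₁ y₂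
  have hℓ : v.HasResidue (ℓ * t) ((a⁻¹ ^ 2 * a⁻¹ ^ 2 + a⁻¹ ^ 2 * b⁻¹ ^ 2 + b⁻¹ ^ 2 * b⁻¹ ^ 2) /
      (a⁻¹ ^ 3 + b⁻¹ ^ 3)) := by
    convert hN.div hD hD0 using 1
    rw [← slope_mul_sub_negY hP.1 hQ.1 hxy, eq_div_iff (hD.ne_zero hD0)]
    ring
  have hX : v.HasResidue (W.addX x₁ x₂ ℓ * t ^ 2) ((a + b)⁻¹ ^ 2) := by
    convert (((hℓ.mul hℓ).add (h₁.mul hℓ)).sub h₂).sub hx₁ |>.sub hx₂ using 1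
    · rw [addX]; ring
    · field_simp; ring
  have hY : v.HasResidue (W.addY x₁ x₂ y₁ ℓ * t ^ 3) ((a + b)⁻¹ ^ 3) := by
    convert ((hℓ.mul (hX.sub hx₁)).neg.sub hy₁).sub (h₁.mul hX) |>.sub h₃ using 1
    · rw [addY, negAddY, negY]; ring
    · field_simp; ring
  exact ⟨_, _, nonsingular_add hP hQ hxy, add_some hxy, hX, hY⟩

theorem ReducesToCusp.succ_nsmul (hP : P.ReducesToCusp v t a) (ha : 0 < a) :
    ∀ n : ℕ, ((n + 1) • P).ReducesToCusp v t ((n + 1 : ℕ) * a)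
  | 0 => by simpa using hP
  | n + 1 => by
    rw [_root_.succ_nsmul, Nat.cast_succ, add_one_mul]
    exact (hP.succ_nsmul ha n).add h₁ h₂ h₃ h₄ hP (by positivity) ha

theorem ReducesToCusp.not_isOfFinAddOrder (hP : P.ReducesToCusp v t a) (ha : 0 < a) :
    ¬IsOfFinAddOrder P := by
  rw [isOfFinAddOrder_iff_nsmul_eq_zero]
  rintro ⟨n, hn, hnP⟩
  obtain ⟨n, rfl⟩ := Nat.exists_eq_add_one_of_ne_zero hn.ne'
  exact (hP.succ_nsmul h₁ h₂ h₃ h₄ ha n).ne_zero hnP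

end WeierstrassCurve.Affine.Point

def cyclotomicThreePlace : HeightOneSpectrum ℚ[X] where
  asIdeal := Ideal.span {cyclotomic 3 ℚ}
  isPrime := (Ideal.span_singleton_prime (cyclotomic_ne_zero 3 ℚ)).mpr
    (cyclotomic.irreducible_rat (by norm_num)).prime
  ne_bot := by simpa using cyclotomic_ne_zero 3 ℚ

local notation "v₃" => cyclotomicThreePlace.valuation (RatFunc ℚ)

instance : Valuation.IsTrivialOn ℚ v₃ :=
  .of_le_one _ fun q => by
    rw [IsScalarTower.algebraMap_apply ℚ ℚ[X]]
    exact HeightOneSpectrum.valuation_le_one _ _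

lemma valuation_cyclotomicThreePlace_lt_one {f : ℚ[X]} (hf : X ^ 2 + X + 1 ∣ f) :
    v₃ (algebraMap ℚ[X] (RatFunc ℚ) f) < 1 := by
  rw [HeightOneSpectrum.valuation_lt_one_iff_mem]
  exact Ideal.mem_span_singleton.mpr (cyclotomic_three ℚ ▸ hf)

lemma RatFunc.algebraMap_ne_zero_of_eval_ne_zero {f : ℚ[X]} {a : ℚ} (h : f.eval a ≠ 0) :
    algebraMap ℚ[X] (RatFunc ℚ) f ≠ 0 :=
  RatFunc.algebraMap_ne_zero fun hf => h (by rw [hf, Polynomial.eval_zero])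

local notation "xP" => (-(1 / 4) * (RatFunc.X ^ 4 + RatFunc.X ^ 2 + 1) : RatFunc ℚ)
local notation "yP" => ((1 / 8) * (RatFunc.X ^ 2 - RatFunc.X + 1) ^ 3 : RatFunc ℚ)

namespace W13

lemma Δ_ne_zero : W13.Δ ≠ 0 := by
  have : W13.Δ = algebraMap ℚ[X] (RatFunc ℚ) ((X ^ 2 + 5) ^ 3 - 27) := by
    simp [W13, WeierstrassCurve.Δ, WeierstrassCurve.b₂, WeierstrassCurve.b₄,
      WeierstrassCurve.b₆, WeierstrassCurve.b₈, map_ofNat]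
    ring
  exact this ▸ RatFunc.algebraMap_ne_zero_of_eval_ne_zero (a := 0) (by norm_num)

lemma nonsingular_zero_zero : W13.Nonsingular 0 0 :=
  (equation_iff_nonsingular_of_Δ_ne_zero Δ_ne_zero).mp (by simp [W13, equation_iff])

lemma nonsingular_P : W13.Nonsingular xP yP :=
  (equation_iff_nonsingular_of_Δ_ne_zero Δ_ne_zero).mp
    (by rw [equation_iff]; simp only [W13]; ring)

lemma xP_eq :
    xP = algebraMap ℚ[X] (RatFunc ℚ) (C (-1 / 4) * ((X ^ 2 + X + 1) * (X ^ 2 - X + 1))) := by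
  simp; ring

lemma xP_ne_zero : xP ≠ 0 :=
  xP_eq ▸ RatFunc.algebraMap_ne_zero_of_eval_ne_zero (a := 0) (by norm_num)

lemma valuation_xP_lt_one : v₃ xP < 1 :=
  xP_eq ▸ valuation_cyclotomicThreePlace_lt_one (dvd_mul_of_dvd_right (dvd_mul_right _ _) _)

lemma hasResidue_neg_yP : Valuation.HasResidue v₃ (-yP) (1 : ℚ) := by
  have : -yP - algebraMap ℚ (RatFunc ℚ) 1 = algebraMap ℚ[X] (RatFunc ℚ)
      (C (-1 / 8) * ((X ^ 2 + X + 1) * (X ^ 4 - 4 * X ^ 3 + 9 * X ^ 2 - 12 * X + 9))) := by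
    simp [map_ofNat]; ring
  rw [Valuation.HasResidue, this]
  exact valuation_cyclotomicThreePlace_lt_one (dvd_mul_of_dvd_right (dvd_mul_right _ _) _)

lemma reducesToCusp_P_add_zero_zero [DecidableEq (RatFunc ℚ)] :
    (Point.some _ _ nonsingular_P + Point.some _ _ nonsingular_zero_zero).ReducesToCusp v₃ xP
      (1 : ℚ) := by
  refine ⟨_, _, _, Point.add_of_X_ne xP_ne_zero, ?_, ?_⟩
  · rw [addX_zero_mul_sq rfl rfl rfl nonsingular_P.1 xP_ne_zero]
    simpa [W13] using hasResidue_neg_yP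
  · rw [addY_zero_mul_cube rfl rfl rfl nonsingular_P.1 xP_ne_zero]
    simpa [W13] using hasResidue_neg_yP

lemma not_isOfFinAddOrder_P_add_zero_zero [DecidableEq (RatFunc ℚ)] :
    ¬IsOfFinAddOrder (Point.some _ _ nonsingular_P + Point.some _ _ nonsingular_zero_zero) := by
  have ha₁ : v₃ W13.a₁ ≤ 1 := by
    have : W13.a₁ = algebraMap ℚ[X] (RatFunc ℚ) (X ^ 2 + 5) := by simp [W13, map_ofNat]
    exact this ▸ HeightOneSpectrum.valuation_le_one _ _
  have ht := valuation_xP_lt_one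
  refine reducesToCusp_P_add_zero_zero.not_isOfFinAddOrder ?_ ?_ ?_ ?_ one_pos <;>
    rw [Valuation.hasResidue_zero_iff]
  · rw [map_mul]
    exact (mul_le_of_le_one_left' ha₁).trans_lt ht
  · simp [W13]
  · simpa [W13] using pow_lt_one₀ zero_le ht three_ne_zero
  · simp [W13]

end W13

open Classical in
/-- `(0,0)` has exact order 3 and `(-¼(c⁴+c²+1), ⅛(c²-c+1)³)` lies on the curve
and has infinite order. -/
theorem stmt13 :
    ∃ h₀ : W13.Nonsingular 0 0,
      ∃ hP : W13.Nonsingular (-(1 / 4) * (RatFunc.X ^ 4 + RatFunc.X ^ 2 + 1))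
        ((1 / 8) * (RatFunc.X ^ 2 - RatFunc.X + 1) ^ 3),
      addOrderOf (WeierstrassCurve.Affine.Point.some _ _ h₀) = 3 ∧
      ¬ IsOfFinAddOrder (WeierstrassCurve.Affine.Point.some _ _ hP) := by
  have hT := addOrderOf_some_zero_zero (W := W13) rfl rfl W13.nonsingular_zero_zero
  refine ⟨W13.nonsingular_zero_zero, W13.nonsingular_P, hT, fun hP => ?_⟩
  have hTfin : IsOfFinAddOrder (Point.some _ _ W13.nonsingular_zero_zero) :=
    addOrderOf_pos_iff.mp (by rw [hT]; norm_num)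
  exact W13.not_isOfFinAddOrder_P_add_zero_zero (hP.add hTfin)
end
end

section
/- The elliptic curve $y^2 = x^3 + t(t^2 + 4t + 1)x^2 + t^4 x$ over $\mathbb{Q}(t)$ has the rational point $(-t^3, 2t^4)$, and this point has infinite order; moreover $(0,0)$ has exact order $2$. -/
/-!
Evaluating `t` at a transcendental real `s` embeds `ℚ(t)` into `ℝ`. Since `t⁴` is positive there,
the sign of the `x`-coordinate is a homomorphism `E(ℚ(t)) → ℤ/2`: the `x`-coordinates of the three
points of `E` on a line multiply to a square, and their pairwise products sum to `t⁴` when one of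
them vanishes. It sends `P = (-t³, 2t⁴)` to `1` for `s > 0`, so if `P` had finite order `n`, then
`n` would be even and `(n/2)P` a point of order 2. The only one is `(0,0)`: the discriminant
`t²(t+1)²(t²+6t+1)` of `x² + a₂x + a₄` is negative at `s ∈ (-2,-1)`. As `(0,0)` has sign `0`,
`n/2` is even too, and `(n/4)P` halves `(0,0)`. But a half `R` of `(0,0)` has `x(R)² = t⁴`, so
`x(R) = ±t²` and `y(R)²` is `t⁵(t²+6t+1)` or `t⁵(t+1)²`, both negative at `s < -7`.
-/

noncomputable section

/-- The elliptic curve `y² = x³ + t(t² + 4t + 1)x² + t⁴x` over `ℚ(t)`. -/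
def W15 : WeierstrassCurve.Affine (RatFunc ℚ) :=
  { a₁ := 0, a₂ := RatFunc.X * (RatFunc.X ^ 2 + 4 * RatFunc.X + 1), a₃ := 0,
    a₄ := RatFunc.X ^ 4, a₆ := 0 }

section SignBit

variable {R : Type*} [CommRing R] [LinearOrder R] [IsStrictOrderedRing R]

def signBit (r : R) : ZMod 2 := if r < 0 then 1 else 0

omit [IsStrictOrderedRing R] in
@[simp] theorem signBit_zero : signBit (0 : R) = 0 := by simp [signBit]

theorem signBit_eq_of_mul_pos {u v : R} (h : 0 < u * v) : signBit u = signBit v := by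
  rcases pos_and_pos_or_neg_and_neg_of_mul_pos h with ⟨hu, hv⟩ | ⟨hu, hv⟩ <;>
    simp [signBit, hu, hv, not_lt_of_gt]

theorem signBit_eq_add_of_mul_mul_pos {u v w : R} (h : 0 < u * v * w) :
    signBit w = signBit u + signBit v := by
  rcases pos_and_pos_or_neg_and_neg_of_mul_pos h with ⟨huv, hw⟩ | ⟨huv, hw⟩
  · rw [signBit_eq_of_mul_pos huv, CharTwo.add_self_eq_zero]
    simp [signBit, hw.not_gt]
  · rcases mul_neg_iff.mp huv with ⟨hu, hv⟩ | ⟨hu, hv⟩ <;>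
      simp [signBit, hu, hv, hw, hu.not_gt, hv.not_gt]

theorem signBit_eq_add_of_vieta {u v w ν ℓ b : R} (hb : 0 < b) (h₃ : u * v * w = ν ^ 2)
    (h₂ : u * v + (u + v) * w = b - 2 * ℓ * ν) : signBit w = signBit u + signBit v := by
  by_cases hν : ν = 0
  · subst hν
    rcases mul_eq_zero.mp (h₃.trans (zero_pow two_ne_zero)) with huv | rfl
    · rcases mul_eq_zero.mp huv with rfl | rfl
      · rw [signBit_zero, zero_add, signBit_eq_of_mul_pos (v := v) (by linarith)]
      · rw [signBit_zero, add_zero, signBit_eq_of_mul_pos (v := u) (by linarith)]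
    · rw [signBit_zero, signBit_eq_of_mul_pos (v := v) (by linarith), CharTwo.add_self_eq_zero]
  · exact signBit_eq_add_of_mul_mul_pos (h₃ ▸ by positivity)

theorem sq_ne_of_map_neg {F : Type*} [CommRing F] (σ : F →+* R) {r : F} (hr : σ r < 0)
    (y : F) : y ^ 2 ≠ r := by
  rintro rfl
  exact (sq_nonneg (σ y)).not_gt (by rwa [map_pow] at hr)

end SignBit

open Polynomial in
theorem RatFunc.exists_ringHom_real_X_mem_Ioo {a b : ℝ} (hab : a < b) :
    ∃ σ : RatFunc ℚ →+* ℝ, σ RatFunc.X ∈ Set.Ioo a b := by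
  obtain ⟨r, hr, hab⟩ := ((Algebraic.countable ℚ ℝ).dense_compl ℝ).exists_between hab
  have hinj : Function.Injective (aeval r : ℚ[X] →ₐ[ℚ] ℝ) := transcendental_iff_injective.mp hr
  exact ⟨RatFunc.liftRingHom _ (nonZeroDivisors_le_comap_nonZeroDivisors_of_injective _ hinj),
    by simpa [RatFunc.liftRingHom_X] using hab⟩

theorem not_isOfFinAddOrder_of_map_eq_one {G : Type*} [AddMonoid G] (φ : G →+ ZMod 2)
    {P T : G} (hP : φ P = 1) (hT : φ T = 0) (htors : ∀ Q : G, 2 • Q = 0 → Q = 0 ∨ Q = T)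
    (hhalf : ∀ R : G, 2 • R ≠ T) : ¬IsOfFinAddOrder P := by
  intro hfin
  have hn := hfin.addOrderOf_pos
  have heven : Even (addOrderOf P) := by
    rw [← ZMod.natCast_eq_zero_iff_even, ← nsmul_one, ← hP, ← map_nsmul,
      addOrderOf_nsmul_eq_zero, map_zero]
  obtain ⟨m, hm⟩ := heven
  have hQ : 2 • (m • P) = 0 := by
    rw [← mul_nsmul', two_mul, ← hm, addOrderOf_nsmul_eq_zero]
  have hQ0 : m • P ≠ 0 := nsmul_ne_zero_of_lt_addOrderOf (by omega) (by omega)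
  have hQT : m • P = T := (htors _ hQ).resolve_left hQ0
  obtain ⟨k, hk⟩ : Even m := by
    rw [← ZMod.natCast_eq_zero_iff_even, ← nsmul_one, ← hP, ← map_nsmul, hQT, hT]
  exact hhalf (k • P) (by rw [← mul_nsmul', two_mul, ← hk, hQT])

namespace WeierstrassCurve.Affine

variable {F : Type*} [Field F] [DecidableEq F] {W : WeierstrassCurve.Affine F}
  [WeierstrassCurve.IsCharNeTwoNF W]

theorem vieta_addX_slope (ha₆ : W.a₆ = 0) {x₁ x₂ y₁ y₂ : F} (h₁ : W.Equation x₁ y₁)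
    (h₂ : W.Equation x₂ y₂) (hxy : ¬(x₁ = x₂ ∧ y₁ = W.negY x₂ y₂)) :
    x₁ * x₂ * W.addX x₁ x₂ (W.slope x₁ x₂ y₁ y₂) = (y₁ - W.slope x₁ x₂ y₁ y₂ * x₁) ^ 2 ∧
      x₁ * x₂ + (x₁ + x₂) * W.addX x₁ x₂ (W.slope x₁ x₂ y₁ y₂) =
        W.a₄ - 2 * W.slope x₁ x₂ y₁ y₂ * (y₁ - W.slope x₁ x₂ y₁ y₂ * x₁) := by
  have h := addPolynomial_slope h₁ h₂ hxy
  rw [addPolynomial_eq, neg_inj, Cubic.prod_X_sub_C_eq, Cubic.toPoly_injective] at h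
  have hc := congrArg Cubic.c h
  have hd := congrArg Cubic.d h
  simp only [IsCharNeTwoNF.a₁, IsCharNeTwoNF.a₃, ha₆] at hc hd
  constructor
  · linear_combination hd
  · linear_combination -hc

namespace Point

variable {R : Type*} [CommRing R] [LinearOrder R] [IsStrictOrderedRing R]

def xSign (σ : F →+* R) : W.Point → ZMod 2
  | zero => 0
  | some x _ _ => signBit (σ x)

theorem xSign_add (ha₆ : W.a₆ = 0) (σ : F →+* R) (hb : 0 < σ W.a₄) (P Q : W.Point) :
    xSign σ (P + Q) = xSign σ P + xSign σ Q := by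
  rcases P with _ | @⟨x₁, y₁, h₁⟩
  · simp [← zero_def, xSign]
  rcases Q with _ | @⟨x₂, y₂, h₂⟩
  · simp [← zero_def, xSign]
  by_cases hxy : x₁ = x₂ ∧ y₁ = W.negY x₂ y₂
  · rw [add_of_Y_eq hxy.1 hxy.2, zero_def]
    simp [xSign, hxy.1, CharTwo.add_self_eq_zero]
  · rw [add_some hxy]
    change signBit _ = signBit _ + signBit _
    obtain ⟨h₃, h₂⟩ := vieta_addX_slope ha₆ h₁.1 h₂.1 hxy
    generalize W.slope x₁ x₂ y₁ y₂ = ℓ at h₃ h₂ ⊢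
    generalize y₁ - ℓ * x₁ = ν at h₃ h₂
    refine signBit_eq_add_of_vieta (ν := σ ν) (ℓ := σ ℓ) hb ?_ ?_
    · simpa only [map_mul, map_pow] using congrArg σ h₃
    · simpa only [map_mul, map_add, map_sub, map_ofNat] using congrArg σ h₂

def xSignHom (ha₆ : W.a₆ = 0) (σ : F →+* R) (hb : 0 < σ W.a₄) : W.Point →+ ZMod 2 :=
  AddMonoidHom.mk' (xSign σ) (xSign_add ha₆ σ hb)

@[simp] theorem xSignHom_some (ha₆ : W.a₆ = 0) (σ : F →+* R) (hb : 0 < σ W.a₄) {x y : F}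
    (h : W.Nonsingular x y) : xSignHom ha₆ σ hb (some x y h) = signBit (σ x) := rfl

theorem Y_eq_zero_of_add_self_eq_zero [NeZero (2 : F)] {x y : F} {h : W.Nonsingular x y}
    (hP : some x y h + some x y h = 0) : y = 0 := by
  by_contra hy
  refine some_ne_zero _ (hP ▸ (add_self_of_Y_ne fun hneg => hy ?_).symm)
  rw [negY, IsCharNeTwoNF.a₁, IsCharNeTwoNF.a₃] at hneg
  exact (mul_eq_zero.mp (by linear_combination hneg : (2 : F) * y = 0)).resolve_left two_ne_zero

theorem sq_eq_a₄_of_add_self_eq_some_zero (ha₆ : W.a₆ = 0) {x y y₀ : F}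
    {h : W.Nonsingular x y} {h₀ : W.Nonsingular 0 y₀}
    (hR : some x y h + some x y h = some 0 y₀ h₀) : x ^ 2 = W.a₄ := by
  have hy : y ≠ W.negY x y := fun hy => some_ne_zero h₀ (hR ▸ add_self_of_Y_eq hy)
  rw [add_self_of_Y_ne hy, some.injEq] at hR
  obtain ⟨h₃, h₂⟩ := vieta_addX_slope ha₆ h.1 h.1 fun hxy => hy hxy.2
  rw [hR.1, mul_zero, eq_comm, sq_eq_zero_iff] at h₃
  linear_combination h₂ - 2 * W.slope x x y y * h₃ - (x + x) * hR.1

end Point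

end WeierstrassCurve.Affine

instance : WeierstrassCurve.IsCharNeTwoNF W15 := ⟨rfl, rfl⟩

namespace W15

open RatFunc (X)
open WeierstrassCurve.Affine
open Classical

theorem a₆_eq_zero : W15.a₆ = 0 := rfl

theorem equation_iff {x y : RatFunc ℚ} :
    W15.Equation x y ↔ y ^ 2 = x * (x ^ 2 + X * (X ^ 2 + 4 * X + 1) * x + X ^ 4) := by
  rw [WeierstrassCurve.Affine.equation_iff]
  change y ^ 2 + 0 * x * y + 0 * y = x ^ 3 + X * (X ^ 2 + 4 * X + 1) * x ^ 2 + X ^ 4 * x + 0 ↔ _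
  constructor <;> intro h <;> linear_combination h

theorem nonsingular_neg_X_pow_three : W15.Nonsingular (-(X ^ 3)) (2 * X ^ 4) := by
  refine (nonsingular_iff' _ _).mpr ⟨equation_iff.mpr (by ring), Or.inr ?_⟩
  change 2 * (2 * X ^ 4) + 0 * _ + 0 ≠ (0 : RatFunc ℚ)
  simp [RatFunc.X_ne_zero]

theorem nonsingular_zero : W15.Nonsingular 0 0 := by
  refine (nonsingular_iff' _ _).mpr ⟨equation_iff.mpr (by ring), Or.inl ?_⟩
  change 0 * 0 - (3 * 0 ^ 2 + 2 * _ * 0 + X ^ 4) ≠ (0 : RatFunc ℚ)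
  simp [RatFunc.X_ne_zero]

theorem map_a₄_pos (σ : RatFunc ℚ →+* ℝ) : 0 < σ W15.a₄ := by
  have : σ X ≠ 0 := (map_ne_zero σ).mpr RatFunc.X_ne_zero
  change 0 < σ (X ^ 4)
  rw [map_pow]
  positivity

theorem quadratic_ne_zero (x : RatFunc ℚ) : x ^ 2 + X * (X ^ 2 + 4 * X + 1) * x + X ^ 4 ≠ 0 := by
  obtain ⟨σ, hlo, hhi⟩ := RatFunc.exists_ringHom_real_X_mem_Ioo (by norm_num : (-2 : ℝ) < -1)
  intro hx
  -- complete the square: `(2x + a₂)² = a₂² - 4a₄ = t²(t+1)²(t²+6t+1)`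
  refine sq_ne_of_map_neg σ (r := X ^ 2 * (X + 1) ^ 2 * (X ^ 2 + 6 * X + 1)) ?_
    (2 * x + X * (X ^ 2 + 4 * X + 1)) (by linear_combination 4 * hx)
  simp only [map_mul, map_pow, map_add, map_one, map_ofNat]
  have h₀ : σ X ≠ 0 := by linarith
  have h₁ : σ X + 1 ≠ 0 := by linarith
  exact mul_neg_of_pos_of_neg (by positivity) (by nlinarith)

theorem eq_zero_or_eq_of_two_nsmul_eq_zero (Q : W15.Point) (hQ : 2 • Q = 0) :
    Q = 0 ∨ Q = .some 0 0 nonsingular_zero := by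
  rcases Q with _ | @⟨x, y, h⟩
  · exact Or.inl rfl
  rw [two_nsmul] at hQ
  obtain rfl := Point.Y_eq_zero_of_add_self_eq_zero hQ
  have hx : x * (x ^ 2 + X * (X ^ 2 + 4 * X + 1) * x + X ^ 4) = 0 :=
    (equation_iff.mp h.1).symm.trans (zero_pow two_ne_zero)
  obtain rfl := (mul_eq_zero.mp hx).resolve_right (quadratic_ne_zero x)
  exact Or.inr rfl

theorem two_nsmul_ne_some_zero (R : W15.Point) : 2 • R ≠ .some 0 0 nonsingular_zero := by
  intro hR
  rcases R with _ | @⟨x, y, h⟩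
  · rw [← Point.zero_def, nsmul_zero] at hR
    exact Point.some_ne_zero _ hR.symm
  rw [two_nsmul] at hR
  have hx : x ^ 2 = (X ^ 2) ^ 2 := by
    rw [Point.sq_eq_a₄_of_add_self_eq_some_zero a₆_eq_zero hR]; change X ^ 4 = _; ring
  have hy := equation_iff.mp h.1
  obtain ⟨σ, hlo, hhi⟩ := RatFunc.exists_ringHom_real_X_mem_Ioo (by norm_num : (-8 : ℝ) < -7)
  rcases sq_eq_sq_iff_eq_or_eq_neg.mp hx with rfl | rfl
  · refine sq_ne_of_map_neg σ (r := X ^ 5 * (X ^ 2 + 6 * X + 1)) ?_ y (by rw [hy]; ring)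
    simp only [map_mul, map_pow, map_add, map_one, map_ofNat]
    exact mul_neg_of_neg_of_pos (Odd.pow_neg (by decide) (by linarith)) (by nlinarith)
  · refine sq_ne_of_map_neg σ (r := X ^ 5 * (X + 1) ^ 2) ?_ y (by rw [hy]; ring)
    simp only [map_mul, map_pow, map_add, map_one]
    have : σ X + 1 ≠ 0 := by linarith
    exact mul_neg_of_neg_of_pos (Odd.pow_neg (by decide) (by linarith)) (by positivity)

end W15

open Classical in
/-- The point `(-t³, 2t⁴)` lies on the curve and has infinite order; `(0,0)` has
exact order 2. -/
theorem stmt15 :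
    ∃ hP : W15.Nonsingular (-(RatFunc.X ^ 3)) (2 * RatFunc.X ^ 4),
      ∃ h₀ : W15.Nonsingular 0 0,
      ¬ IsOfFinAddOrder (WeierstrassCurve.Affine.Point.some _ _ hP) ∧
      addOrderOf (WeierstrassCurve.Affine.Point.some _ _ h₀) = 2 := by
  refine ⟨W15.nonsingular_neg_X_pow_three, W15.nonsingular_zero, ?_, ?_⟩
  · obtain ⟨σ, hσ, -⟩ := RatFunc.exists_ringHom_real_X_mem_Ioo zero_lt_one
    refine not_isOfFinAddOrder_of_map_eq_one
      (WeierstrassCurve.Affine.Point.xSignHom W15.a₆_eq_zero σ (W15.map_a₄_pos σ)) ?_ ?_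
      W15.eq_zero_or_eq_of_two_nsmul_eq_zero W15.two_nsmul_ne_some_zero
    · simp [signBit, hσ]
    · simp
  · refine addOrderOf_eq_prime ?_ (WeierstrassCurve.Affine.Point.some_ne_zero _)
    rw [two_nsmul]
    exact WeierstrassCurve.Affine.Point.add_self_of_Y_eq (by simp [WeierstrassCurve.Affine.negY])
end
end

section
/- On the elliptic curve $y^2 + w^2(x+1)y = x(x+1)(x+w^2)$ over $\mathbb{Q}(w)$, the point $(-w^2, 0)$ has exact order $6$. -/
/-! The point `P = (-t, 0)` of `y² + t(x+1)y = x(x+1)(x+t)` satisfies `2P = (0, 0)` (the tangent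
at `P` has slope `-1`) and `3P = (-1, 0)`, a point of order two since the tangent there is vertical.
Hence `6P = 0` while `2P, 3P ≠ 0`. The curve of the theorem is the member `t = w²`, and `w² ≠ 0, 1`
for degree reasons. -/

noncomputable section

/-- The elliptic curve `y² + w²(x+1)y = x(x+1)(x+w²)` over `ℚ(w)`. -/
def W17 : WeierstrassCurve.Affine (RatFunc ℚ) :=
  { a₁ := RatFunc.X ^ 2, a₂ := 1 + RatFunc.X ^ 2, a₃ := RatFunc.X ^ 2,
    a₄ := RatFunc.X ^ 2, a₆ := 0 }

theorem addOrderOf_eq_six {G : Type*} [AddMonoid G] {a : G} (h6 : 6 • a = 0) (h2 : 2 • a ≠ 0)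
    (h3 : 3 • a ≠ 0) : addOrderOf a = 6 := by
  have hdvd : addOrderOf a ∣ 6 := addOrderOf_dvd_of_nsmul_eq_zero h6
  have hn2 : ¬addOrderOf a ∣ 2 := mt addOrderOf_dvd_iff_nsmul_eq_zero.mp h2
  have hn3 : ¬addOrderOf a ∣ 3 := mt addOrderOf_dvd_iff_nsmul_eq_zero.mp h3
  have hle : addOrderOf a ≤ 6 := Nat.le_of_dvd (by norm_num) hdvd
  interval_cases addOrderOf a <;> simp_all

namespace WeierstrassCurve.Affine

variable {F : Type*} [Field F]

def sixTorsionFamily (t : F) : Affine F :=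
  { a₁ := t, a₂ := 1 + t, a₃ := t, a₄ := t, a₆ := 0 }

namespace sixTorsionFamily

variable {t : F}

theorem nonsingular_neg_param (ht0 : t ≠ 0) (ht1 : t ≠ 1) :
    (sixTorsionFamily t).Nonsingular (-t) 0 := by
  rw [nonsingular_iff', equation_iff']
  refine ⟨by simp only [sixTorsionFamily]; ring, Or.inr ?_⟩
  have : t * (1 - t) ≠ 0 := mul_ne_zero ht0 (sub_ne_zero.mpr ht1.symm)
  simp only [sixTorsionFamily]
  exact fun h => this (by linear_combination h)

theorem nonsingular_zero (ht0 : t ≠ 0) : (sixTorsionFamily t).Nonsingular 0 0 := by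
  rw [nonsingular_iff', equation_iff']
  refine ⟨by simp only [sixTorsionFamily]; ring, Or.inr ?_⟩
  simpa [sixTorsionFamily] using ht0

theorem nonsingular_neg_one (ht1 : t ≠ 1) : (sixTorsionFamily t).Nonsingular (-1) 0 := by
  rw [nonsingular_iff', equation_iff']
  refine ⟨by simp only [sixTorsionFamily]; ring, Or.inl ?_⟩
  simp only [sixTorsionFamily]
  exact fun h => sub_ne_zero.mpr ht1 (by linear_combination h)

theorem zero_ne_negY_neg_param (ht0 : t ≠ 0) (ht1 : t ≠ 1) :
    (0 : F) ≠ (sixTorsionFamily t).negY (-t) 0 := by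
  have : t * (t - 1) ≠ 0 := mul_ne_zero ht0 (sub_ne_zero.mpr ht1)
  simp only [negY, sixTorsionFamily]
  exact fun h => this (by linear_combination -h)

variable [DecidableEq F]

theorem slope_neg_param (ht0 : t ≠ 0) (ht1 : t ≠ 1) :
    (sixTorsionFamily t).slope (-t) (-t) 0 0 = -1 := by
  have hy := zero_ne_negY_neg_param ht0 ht1
  rw [slope_of_Y_ne rfl hy, div_eq_iff (sub_ne_zero.mpr hy)]
  simp only [negY, sixTorsionFamily]
  ring

theorem two_nsmul_some_neg_param (ht0 : t ≠ 0) (ht1 : t ≠ 1) :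
    2 • Point.some _ _ (nonsingular_neg_param ht0 ht1) = Point.some _ _ (nonsingular_zero ht0) := by
  rw [two_nsmul, Point.add_self_of_Y_ne (zero_ne_negY_neg_param ht0 ht1), Point.some.injEq,
    slope_neg_param ht0 ht1]
  simp only [addX, addY, negAddY, negY, sixTorsionFamily]
  constructor <;> ring

theorem three_nsmul_some_neg_param (ht0 : t ≠ 0) (ht1 : t ≠ 1) :
    3 • Point.some _ _ (nonsingular_neg_param ht0 ht1) =
      Point.some _ _ (nonsingular_neg_one ht1) := by
  have hx : (0 : F) ≠ -t := by simpa [eq_comm] using ht0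
  rw [succ_nsmul, two_nsmul_some_neg_param ht0 ht1, Point.add_of_X_ne hx, Point.some.injEq,
    slope_of_X_ne hx]
  simp only [addX, addY, negAddY, negY, sixTorsionFamily]
  constructor <;> ring

theorem six_nsmul_some_neg_param (ht0 : t ≠ 0) (ht1 : t ≠ 1) :
    6 • Point.some _ _ (nonsingular_neg_param ht0 ht1) = 0 := by
  rw [show 6 = 3 + 3 from rfl, add_nsmul, three_nsmul_some_neg_param ht0 ht1]
  exact Point.add_self_of_Y_eq (by simp only [negY, sixTorsionFamily]; ring)

theorem addOrderOf_some_neg_param (ht0 : t ≠ 0) (ht1 : t ≠ 1) :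
    addOrderOf (Point.some _ _ (nonsingular_neg_param ht0 ht1)) = 6 :=
  addOrderOf_eq_six (six_nsmul_some_neg_param ht0 ht1)
    (two_nsmul_some_neg_param ht0 ht1 ▸ Point.some_ne_zero _)
    (three_nsmul_some_neg_param ht0 ht1 ▸ Point.some_ne_zero _)

end sixTorsionFamily

end WeierstrassCurve.Affine

open Classical in
/-- The point `(-w², 0)` has exact order 6. -/
theorem stmt17 :
    ∃ h : W17.Nonsingular (-(RatFunc.X ^ 2)) 0,
      addOrderOf (WeierstrassCurve.Affine.Point.some _ _ h) = 6 := by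
  have hw0 : (RatFunc.X : RatFunc ℚ) ^ 2 ≠ 0 := pow_ne_zero 2 RatFunc.X_ne_zero
  have hw1 : (RatFunc.X : RatFunc ℚ) ^ 2 ≠ 1 := fun h => by
    have hdeg := congrArg RatFunc.intDegree h
    rw [pow_two, RatFunc.intDegree_mul RatFunc.X_ne_zero RatFunc.X_ne_zero, RatFunc.intDegree_X,
      RatFunc.intDegree_one] at hdeg
    omega
  exact ⟨_, WeierstrassCurve.Affine.sixTorsionFamily.addOrderOf_some_neg_param hw0 hw1⟩
end
end
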